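/- (Anti-normal form) Every strongly positive element of Thompson's group F can be expressed uniquely in the form x_{i_n} ⋯ x_{i_2} x_{i_1}, where n ≥ 0, each i_k ≥ 1, and i_{k+1} ≥ i_k − 1 for all 1 ≤ k ≤ n − 1. -/

import Mathlib

/-- The defining relations of Thompson's group `F`:
`xₙ xₖ (xₖ xₙ₊₁)⁻¹` for all `k < n`. -/
def thompsonRels : Set (FreeGroup ℕ) :=
  {r | ∃ n k : ℕ, k < n ∧
    r = FreeGroup.of n * FreeGroup.of k * (FreeGroup.of k * FreeGroup.of (n + 1))⁻¹}

/-- Thompson's group `F` as a presented group. -/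
abbrev ThompsonF : Type := PresentedGroup thompsonRels

/-- The generator `xₙ` of Thompson's group `F`. -/
def xF (n : ℕ) : ThompsonF := PresentedGroup.of n

/-- Word length of `g` with respect to `{x₀, x₁}`: the least `m` such that `g`
is a product of `m` elements of `{x₀, x₁} ∪ {x₀, x₁}⁻¹`. -/
noncomputable def wordLength (g : ThompsonF) : ℕ :=
  sInf {m | ∃ l : List ThompsonF, l.length = m ∧
    (∀ a ∈ l, a ∈ ({xF 0, xF 1} : Set ThompsonF) ∨ a⁻¹ ∈ ({xF 0, xF 1} : Set ThompsonF)) ∧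
    l.prod = g}

/-- The strongly positive monoid of Thompson's group `F`: the submonoid
generated by `{x₁, x₂, …}`. -/
def stronglyPosMonoid : Submonoid ThompsonF :=
  Submonoid.closure (Set.range fun n : ℕ => xF (n + 1))

/-!
Existence: the relation `x_{b-1} x_a = x_a x_b` (`a + 1 < b`) lets a new leftmost letter `x_a`
be pushed to the right past every `x_b` with `b > a + 1`, lowering `b` by one, until the word is
anti-normal again.

Uniqueness: `F` acts on `ℚ` with `x_i` fixing `(-∞, i]`, halving `[i, i + 2]` onto `[i, i + 1]`
and translating `[i + 2, ∞)` by `-1`. An anti-normal word `x_a ⋯` of length `n` acts as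
translation by `-n` exactly on `[a + n + 1, ∞)`, so its action determines `n` and then `a`;
cancelling `x_a` and recursing recovers the whole word.
-/

namespace Thompson

def xPerm (i : ℕ) : Equiv.Perm ℚ where
  toFun t := if t ≤ i then t else if t ≤ i + 2 then (t + i) / 2 else t - 1
  invFun t := if t ≤ i then t else if t ≤ i + 1 then 2 * t - i else t + 1
  left_inv t := by dsimp only; split_ifs <;> linarith
  right_inv t := by dsimp only; split_ifs <;> linarith

lemma xPerm_apply (i : ℕ) (t : ℚ) :
    xPerm i t = if t ≤ i then t else if t ≤ i + 2 then (t + i) / 2 else t - 1 := rfl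

lemma xPerm_mul_xPerm {k n : ℕ} (h : k < n) : xPerm n * xPerm k = xPerm k * xPerm (n + 1) := by
  have hkn : (k : ℚ) + 1 ≤ n := by exact_mod_cast h
  ext t
  simp only [Equiv.Perm.mul_apply, xPerm_apply, Nat.cast_add, Nat.cast_one]
  split_ifs <;> linarith

lemma sub_one_le_xPerm (i : ℕ) (t : ℚ) : t - 1 ≤ xPerm i t := by
  rw [xPerm_apply]; split_ifs <;> linarith

lemma xPerm_of_add_two_le {i : ℕ} {t : ℚ} (h : i + 2 ≤ t) : xPerm i t = t - 1 := by
  rw [xPerm_apply]; split_ifs <;> linarith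

lemma sub_one_lt_xPerm {i : ℕ} {t : ℚ} (h : t < i + 2) : t - 1 < xPerm i t := by
  rw [xPerm_apply]; split_ifs <;> linarith

lemma xF_mul_xF {k n : ℕ} (h : k < n) : xF n * xF k = xF k * xF (n + 1) := by
  have := PresentedGroup.mk_eq_mk_of_mul_inv_mem (rels := thompsonRels) ⟨n, k, h, rfl⟩
  rwa [map_mul, map_mul] at this

lemma lift_xPerm_eq_one : ∀ r ∈ thompsonRels, FreeGroup.lift xPerm r = 1 := by
  rintro r ⟨n, k, h, rfl⟩
  simp [xPerm_mul_xPerm h]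

noncomputable def toPerm : ThompsonF →* Equiv.Perm ℚ := PresentedGroup.toGroup lift_xPerm_eq_one

lemma toPerm_prod_map_xF (l : List ℕ) : toPerm (l.map xF).prod = (l.map xPerm).prod := by
  simp [map_list_prod, Function.comp_def, toPerm, xF]

variable {a : ℕ} {l : List ℕ}

lemma prod_map_xPerm_cons_of_le (hl : (a :: l).IsChain (fun a b => b ≤ a + 1)) {t : ℚ}
    (ht : a + l.length + 2 ≤ t) : ((a :: l).map xPerm).prod t = t - (l.length + 1) := by
  induction l generalizing a t with
  | nil => simpa using xPerm_of_add_two_le (by simpa using ht)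
  | cons b l ih =>
    obtain ⟨hab, hl⟩ := List.isChain_cons_cons.1 hl
    replace hab : (b : ℚ) ≤ a + 1 := by exact_mod_cast hab
    simp only [List.length_cons, Nat.cast_add, Nat.cast_one] at ht
    have htail := ih hl (t := t) (by linarith)
    simp only [List.map_cons, List.prod_cons, Equiv.Perm.mul_apply, List.length_cons,
      Nat.cast_add, Nat.cast_one] at htail ⊢
    rw [htail, xPerm_of_add_two_le (by linarith)]
    ring

lemma lt_prod_map_xPerm_cons_of_lt (hl : (a :: l).IsChain (fun a b => b ≤ a + 1)) {t : ℚ}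
    (ht : t < a + l.length + 2) : t - (l.length + 1) < ((a :: l).map xPerm).prod t := by
  induction l generalizing a t with
  | nil => simpa using sub_one_lt_xPerm (by simpa using ht)
  | cons b l ih =>
    have hbl := List.isChain_cons_cons.1 hl
    simp only [List.map_cons, List.prod_cons, Equiv.Perm.mul_apply, List.length_cons,
      Nat.cast_add, Nat.cast_one] at ht ⊢
    rcases lt_or_ge t (b + l.length + 2) with htb | htb
    · have htail := ih hbl.2 htb
      simp only [List.map_cons, List.prod_cons, Equiv.Perm.mul_apply] at htail
      linarith [sub_one_le_xPerm a (xPerm b ((l.map xPerm).prod t))]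
    · have htail := prod_map_xPerm_cons_of_le hbl.2 htb
      simp only [List.map_cons, List.prod_cons, Equiv.Perm.mul_apply] at htail
      rw [htail]
      linarith [sub_one_lt_xPerm (i := a) (t := t - (l.length + 1)) (by linarith)]

lemma prod_map_xPerm_cons_eq_iff (hl : (a :: l).IsChain (fun a b => b ≤ a + 1)) (t : ℚ) :
    ((a :: l).map xPerm).prod t = t - (l.length + 1) ↔ a + l.length + 2 ≤ t := by
  refine ⟨fun h => ?_, prod_map_xPerm_cons_of_le hl⟩
  by_contra! ht
  exact (lt_prod_map_xPerm_cons_of_lt hl ht).ne' h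

lemma eventually_prod_map_xPerm_eq (hl : l.IsChain (fun a b => b ≤ a + 1)) :
    ∀ᶠ t in Filter.atTop, (l.map xPerm).prod t = t - l.length := by
  cases l with
  | nil => simp
  | cons a l =>
    filter_upwards [Filter.eventually_ge_atTop ((a : ℚ) + l.length + 2)] with t ht
    simpa using prod_map_xPerm_cons_of_le hl ht

lemma eq_of_prod_map_xPerm_eq {m : List ℕ} (hl : l.IsChain (fun a b => b ≤ a + 1))
    (hm : m.IsChain (fun a b => b ≤ a + 1)) (h : (l.map xPerm).prod = (m.map xPerm).prod) :
    l = m := by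
  have hlen : l.length = m.length := by
    obtain ⟨t, hl, hm⟩ := ((eventually_prod_map_xPerm_eq hl).and
      (eventually_prod_map_xPerm_eq hm)).exists
    rw [h, hm] at hl
    exact_mod_cast (sub_right_inj.1 hl).symm
  induction l generalizing m with
  | nil => exact (List.length_eq_zero_iff.1 hlen.symm).symm
  | cons a l ih =>
    obtain _ | ⟨b, m⟩ := m
    · simp at hlen
    replace hlen : l.length = m.length := Nat.succ_injective hlen
    have hab : a = b := by
      have key (t : ℚ) : (a : ℚ) + l.length + 2 ≤ t ↔ (b : ℚ) + l.length + 2 ≤ t := by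
        rw [← prod_map_xPerm_cons_eq_iff hl, h, hlen, prod_map_xPerm_cons_eq_iff hm]
      have : (a : ℚ) = b := by
        linarith [(key (a + l.length + 2)).1 le_rfl, (key (b + l.length + 2)).2 le_rfl]
      exact_mod_cast this
    subst hab
    simp only [List.map_cons, List.prod_cons, mul_right_inj] at h
    exact congrArg (a :: ·) (ih hl.tail hm.tail h hlen)

def insertGen (a : ℕ) : List ℕ → List ℕ
  | [] => [a]
  | b :: t => if b ≤ a + 1 then a :: b :: t else (b - 1) :: insertGen a t

lemma one_le_of_mem_insertGen (ha : 1 ≤ a) (hl : ∀ i ∈ l, 1 ≤ i) :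
    ∀ i ∈ insertGen a l, 1 ≤ i := by
  induction l with
  | nil => simpa [insertGen]
  | cons b t ih =>
    simp only [List.forall_mem_cons] at hl
    unfold insertGen
    split_ifs with hba
    · exact List.forall_mem_cons.2 ⟨ha, List.forall_mem_cons.2 hl⟩
    · exact List.forall_mem_cons.2 ⟨by omega, ih hl.2⟩

lemma le_of_mem_head?_insertGen {b : ℕ} (hab : a ≤ b) (ht : ∀ c ∈ l.head?, c ≤ b + 1) :
    ∀ c ∈ (insertGen a l).head?, c ≤ b := by
  cases l with
  | nil => simpa [insertGen]
  | cons d t =>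
    simp only [List.head?_cons, Option.mem_def, Option.some.injEq, forall_eq'] at ht
    unfold insertGen
    split_ifs <;> simp <;> omega

lemma isChain_insertGen (hl : l.IsChain (fun a b => b ≤ a + 1)) :
    (insertGen a l).IsChain (fun a b => b ≤ a + 1) := by
  induction l with
  | nil => exact List.isChain_singleton a
  | cons b t ih =>
    unfold insertGen
    split_ifs with hba
    · exact List.isChain_cons_cons.2 ⟨hba, hl⟩
    · rw [List.isChain_cons] at hl ⊢
      refine ⟨fun c hc => ?_, ih hl.2⟩
      have := le_of_mem_head?_insertGen (a := a) (b := b) (by omega) hl.1 c hc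
      omega

lemma prod_map_xF_insertGen (hl : ∀ i ∈ l, 1 ≤ i) :
    ((insertGen a l).map xF).prod = xF a * (l.map xF).prod := by
  induction l with
  | nil => simp [insertGen]
  | cons b t ih =>
    simp only [List.forall_mem_cons] at hl
    unfold insertGen
    split_ifs with hba
    · simp
    · have hrel := xF_mul_xF (k := a) (n := b - 1) (by omega)
      rw [Nat.sub_add_cancel hl.1] at hrel
      simp only [List.map_cons, List.prod_cons, ih hl.2, ← mul_assoc, hrel]

lemma exists_antiNormal_of_mem_stronglyPosMonoid {f : ThompsonF} (hf : f ∈ stronglyPosMonoid) :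
    ∃ l : List ℕ, (∀ i ∈ l, 1 ≤ i) ∧ l.IsChain (fun a b => b ≤ a + 1) ∧ (l.map xF).prod = f := by
  induction hf using Submonoid.closure_induction_left with
  | one => exact ⟨[], by simp, List.isChain_nil, rfl⟩
  | mul_left x hx y _ ih =>
    obtain ⟨n, rfl⟩ := hx
    obtain ⟨l, hl, hchain, rfl⟩ := ih
    exact ⟨insertGen (n + 1) l, one_le_of_mem_insertGen (by omega) hl, isChain_insertGen hchain,
      prod_map_xF_insertGen hl⟩

end Thompson

/-- (Anti-normal form.) Every strongly positive element of `F` can be written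
uniquely as `x_{iₙ} ⋯ x_{i₂} x_{i₁}` (the list `[iₙ, …, i₂, i₁]`, read from
left to right) with every `iₖ ≥ 1` and `iₖ₊₁ ≥ iₖ - 1` for all `k`, i.e. each
entry of the list is at most one more than its predecessor. -/
theorem anti_normal_form (f : ThompsonF) (hf : f ∈ stronglyPosMonoid) :
    ∃! l : List ℕ, (∀ i ∈ l, 1 ≤ i) ∧
      List.Chain' (fun a b => b ≤ a + 1) l ∧ (l.map xF).prod = f := by
  obtain ⟨l, hl, hchain, rfl⟩ := Thompson.exists_antiNormal_of_mem_stronglyPosMonoid hf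
  refine ⟨l, ⟨hl, hchain, rfl⟩, fun m ⟨_, hm, hprod⟩ => ?_⟩
  apply Thompson.eq_of_prod_map_xPerm_eq hm hchain
  rw [← Thompson.toPerm_prod_map_xF, ← Thompson.toPerm_prod_map_xF, hprod]
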